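/- arXiv:1405.7537 — 7 statements merged into one kernel-verified Lean document; each statement's English description precedes it below -/
import Mathlib

section
/- Let A = D + ρ z zᵀ be an n×n real symmetric matrix with D = diag(d₁,…,dₙ) and ρ ≠ 0, and let λ ∈ ℝ satisfy λ ≠ dⱼ for all j. Then λ is an eigenvalue of A if and only if the secular function vanishes at λ, i.e. f(λ) = 1 + ρ ∑_{j=1}^{n} ζⱼ²/(dⱼ − λ) = 0. -/
/-!
For `λ` off the diagonal, the eigen-equation `(D + u vᵀ) x = λ x` reads `(λ - D) x = (vᵀ x) u`,
so every eigenvector is a multiple of the resolvent vector `w = (λ - D)⁻¹ u`, and `w` is one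
exactly when `vᵀ w = 1`. With `u = ρ z` and `v = z` this condition is `f(λ) = 0`.
-/

open Matrix

namespace Matrix

variable {ι K : Type*} [Fintype ι] [DecidableEq ι] [Field K]

theorem diagonal_add_vecMulVec_mulVec_eq_smul_iff {d u v x : ι → K} {lam : K}
    (hlam : ∀ j, lam ≠ d j) :
    (diagonal d + vecMulVec u v) *ᵥ x = lam • x ↔ x = (v ⬝ᵥ x) • fun j => u j / (lam - d j) := by
  rw [add_mulVec, vecMulVec_mulVec, op_smul_eq_smul, funext_iff, funext_iff]
  refine forall_congr' fun i => ?_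
  simp only [Pi.add_apply, Pi.smul_apply, mulVec_diagonal, smul_eq_mul]
  rw [mul_div_assoc', eq_div_iff (sub_ne_zero.mpr (hlam i))]
  constructor <;> intro h <;> linear_combination -h

theorem exists_mulVec_eq_smul_diagonal_add_vecMulVec_iff {d u v : ι → K} {lam : K}
    (hlam : ∀ j, lam ≠ d j) :
    (∃ x, x ≠ 0 ∧ (diagonal d + vecMulVec u v) *ᵥ x = lam • x) ↔
      v ⬝ᵥ (fun j => u j / (lam - d j)) = 1 := by
  set w : ι → K := fun j => u j / (lam - d j)
  simp only [diagonal_add_vecMulVec_mulVec_eq_smul_iff hlam]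
  constructor
  · rintro ⟨x, hx0, hx⟩
    have hs : v ⬝ᵥ x ≠ 0 := fun h => hx0 (by rw [hx, h, zero_smul])
    have : v ⬝ᵥ x = v ⬝ᵥ x * (v ⬝ᵥ w) := by
      conv_lhs => rw [hx]
      rw [dotProduct_smul, smul_eq_mul]
    exact (mul_eq_left₀ hs).mp this.symm
  · intro hw
    refine ⟨w, fun h => ?_, by rw [hw, one_smul]⟩
    rw [h, dotProduct_zero] at hw
    exact zero_ne_one hw

end Matrix

theorem dpr1_eigenvalue_iff_secular_general {n : ℕ} (d z : Fin n → ℝ) (ρ : ℝ)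
    (A : Matrix (Fin n) (Fin n) ℝ)
    (hA : A = Matrix.diagonal d + ρ • Matrix.vecMulVec z z)
    (lam : ℝ) (hlam : ∀ j, lam ≠ d j) :
    (∃ x : Fin n → ℝ, x ≠ 0 ∧ A.mulVec x = lam • x) ↔
      1 + ρ * ∑ j, z j ^ 2 / (d j - lam) = 0 := by
  have hpair : z ⬝ᵥ (fun j => (ρ • z) j / (lam - d j)) = -(ρ * ∑ j, z j ^ 2 / (d j - lam)) := by
    rw [dotProduct, Finset.mul_sum, ← Finset.sum_neg_distrib]
    refine Finset.sum_congr rfl fun j _ => ?_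
    rw [Pi.smul_apply, smul_eq_mul, ← neg_sub lam, div_neg]
    ring
  rw [hA, ← smul_vecMulVec, exists_mulVec_eq_smul_diagonal_add_vecMulVec_iff hlam, hpair,
    neg_eq_iff_eq_neg, eq_neg_iff_add_eq_zero, add_comm]

/-- For a DPR1 matrix `A = D + ρ z zᵀ` with `ρ ≠ 0`, a real number `λ`
that is not a pole `dⱼ` is an eigenvalue of `A` iff the secular function vanishes at `λ`. -/
theorem dpr1_eigenvalue_iff_secular {n : ℕ} (d z : Fin n → ℝ) (ρ : ℝ) (hρ : ρ ≠ 0)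
    (A : Matrix (Fin n) (Fin n) ℝ)
    (hA : A = Matrix.diagonal d + ρ • Matrix.vecMulVec z z)
    (lam : ℝ) (hlam : ∀ j, lam ≠ d j) :
    (∃ x : Fin n → ℝ, x ≠ 0 ∧ A.mulVec x = lam • x) ↔
      1 + ρ * ∑ j, z j ^ 2 / (d j - lam) = 0 :=
  dpr1_eigenvalue_iff_secular_general d z ρ A hA lam hlam
end

section
/- Let A = D + ρ z zᵀ be an n×n real symmetric matrix, where D = diag(d₁,…,dₙ) with d₁ > d₂ > ⋯ > dₙ, ρ > 0, and ζⱼ ≠ 0 for all j. Let λ₁ ≥ λ₂ ≥ ⋯ ≥ λₙ be the eigenvalues of A listed in decreasing order (with multiplicity). Then the strict interlacing property holds: λ₁ > d₁ > λ₂ > d₂ > ⋯ > λₙ > dₙ. -/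
/-!
By the matrix determinant lemma, `p(x) = ∏ⱼ (x - λⱼ)` equals
`∏ⱼ (x - dⱼ) - ρ ∑ⱼ ζⱼ² ∏_{k ≠ j} (x - d_k)`, so at a pole `p(d_m) = -ρ ζ_m² ∏_{k ≠ m} (d_m - d_k)`,
whose sign is `(-1)^(m+1)` (indices from `0`). Hence `p` changes sign on each of the `n` disjoint
intervals `(d₀, ∞), (d₁, d₀), …, (d_{n-1}, d_{n-2})`, and each contains an eigenvalue. Listing the
eigenvalues decreasingly, the `m`-th one must then lie in the `m`-th interval.
-/

open Matrix Finset

theorem det_diagonal_add_smul_vecMulVec_of_ne_zero {ι K : Type*} [Fintype ι] [DecidableEq ι]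
    [Field K] {w : ι → K} (hw : ∀ j, w j ≠ 0) (c : K) (u v : ι → K) :
    (diagonal w + c • vecMulVec u v).det
      = ∏ j, w j + c * ∑ j, u j * v j * ∏ k ∈ univ.erase j, w k := by
  have hunit : IsUnit (diagonal w).det := by
    simpa [det_diagonal, isUnit_iff_ne_zero, prod_ne_zero_iff] using hw
  have hinv : (diagonal w)⁻¹ = diagonal w⁻¹ :=
    inv_eq_left_inv (by simp [diagonal_mul_diagonal, hw])
  rw [← smul_vecMulVec, vecMulVec_eq Unit, det_add_replicateCol_mul_replicateRow hunit,
    hinv, det_unique (n := Unit), Matrix.add_apply, one_apply_eq, mul_apply]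
  simp only [det_diagonal, mul_diagonal, replicateRow_apply, replicateCol_apply, Pi.smul_apply,
    Pi.inv_apply, smul_eq_mul, mul_add, mul_one, mul_sum]
  congr 1
  refine sum_congr rfl fun j _ => ?_
  rw [← mul_prod_erase univ w (mem_univ j)]
  field_simp [hw j]

theorem det_diagonal_add_smul_vecMulVec {ι : Type*} [Fintype ι] [DecidableEq ι]
    (w : ι → ℝ) (c : ℝ) (u v : ι → ℝ) :
    (diagonal w + c • vecMulVec u v).det
      = ∏ j, w j + c * ∑ j, u j * v j * ∏ k ∈ univ.erase j, w k := by
  have hdense : Dense (Set.range w)ᶜ := (Set.finite_range w).countable.dense_compl ℝ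
  have heq := Continuous.ext_on hdense
    (f := fun t => (diagonal (fun j => w j - t) + c • vecMulVec u v).det)
    (g := fun t => ∏ j, (w j - t) + c * ∑ j, u j * v j * ∏ k ∈ univ.erase j, (w k - t))
    (by fun_prop) (by fun_prop) fun t ht =>
      det_diagonal_add_smul_vecMulVec_of_ne_zero
        (fun j => sub_ne_zero.2 fun h => ht ⟨j, h⟩) c u v
  simpa using congrFun heq 0

theorem Matrix.IsHermitian.prod_sub_eigenvalues {n 𝕜 : Type*} [Fintype n] [DecidableEq n]
    [RCLike 𝕜] {A : Matrix n n 𝕜} (hA : A.IsHermitian) (x : 𝕜) :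
    ∏ i, (x - (hA.eigenvalues i : 𝕜)) = (scalar n x - A).det := by
  rw [← eval_charpoly, hA.charpoly_eq, Polynomial.eval_prod]
  simp

theorem prod_sub_eigenvalues_diagonal_add_smul_vecMulVec {n : Type*} [Fintype n] [DecidableEq n]
    {d z : n → ℝ} {ρ : ℝ} (hA : (diagonal d + ρ • vecMulVec z z).IsHermitian) (x : ℝ) :
    ∏ i, (x - hA.eigenvalues i)
      = ∏ j, (x - d j) - ρ * ∑ j, z j ^ 2 * ∏ k ∈ univ.erase j, (x - d k) := by
  have hshift : scalar n x - (diagonal d + ρ • vecMulVec z z)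
      = diagonal (fun j => x - d j) + (-ρ) • vecMulVec z z := by
    rw [scalar_apply, ← sub_sub, diagonal_sub, neg_smul, sub_eq_add_neg]
  have h := hA.prod_sub_eigenvalues x
  rw [RCLike.ofReal_real_eq_id, hshift, det_diagonal_add_smul_vecMulVec] at h
  simpa only [id, sq, neg_mul, ← sub_eq_add_neg] using h

theorem neg_one_pow_card_Iio_mul_prod_erase_sub_pos {ι : Type*} [Fintype ι] [LinearOrder ι]
    [LocallyFiniteOrderBot ι] [LocallyFiniteOrderTop ι] {d : ι → ℝ} (hd : StrictAnti d)
    (m : ι) : 0 < (-1) ^ #(Iio m) * ∏ k ∈ univ.erase m, (d m - d k) := by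
  have hbelow : ∏ k ∈ Iio m, (d m - d k) = (-1) ^ #(Iio m) * ∏ k ∈ Iio m, (d k - d m) := by
    rw [← prod_neg]; simp_rw [neg_sub]
  have hsq : (-1 : ℝ) ^ #(Iio m) * (-1) ^ #(Iio m) = 1 := by rw [← mul_pow]; norm_num
  rw [← compl_singleton, ← Ioi_disjUnion_Iio, prod_disjUnion, hbelow, mul_left_comm,
    ← mul_assoc _ _ (∏ k ∈ Iio m, _), hsq, one_mul]
  refine mul_pos (prod_pos fun k hk => ?_) (prod_pos fun k hk => ?_)
  · exact sub_pos.2 (hd (mem_Ioi.1 hk))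
  · exact sub_pos.2 (hd (mem_Iio.1 hk))

theorem exists_mem_Ioo_of_prod_sub_mul_prod_sub_neg {ι : Type*} (s : Finset ι) (μ : ι → ℝ)
    {a b : ℝ} (hab : a ≤ b) (h : (∏ j ∈ s, (a - μ j)) * ∏ j ∈ s, (b - μ j) < 0) :
    ∃ j ∈ s, μ j ∈ Set.Ioo a b := by
  by_contra! hout
  refine h.not_ge ?_
  rw [← prod_mul_distrib]
  refine prod_nonneg fun j hj => ?_
  by_cases hja : μ j ≤ a
  · exact mul_nonneg (by linarith) (by linarith)
  · have hjb : b ≤ μ j := not_lt.1 fun hjb => hout j hj ⟨not_le.1 hja, hjb⟩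
    exact mul_nonneg_of_nonpos_of_nonpos (by linarith) (by linarith)

/-- `(d m, d (m - 1))` for a strictly antitone `d`, and `(d 0, ∞)` for `m = 0`. -/
def poleInterval {ι α : Type*} [LT ι] [LT α] (d : ι → α) (m : ι) : Set α :=
  {x | d m < x ∧ ∀ k < m, x < d k}

theorem Antitone.apply_mem_poleInterval {ι α : Type*} [LinearOrder ι] [Finite ι] [LinearOrder α]
    {d μ : ι → α} (hμ : Antitone μ) (h : ∀ m, ∃ j, μ j ∈ poleInterval d m) (m : ι) :
    μ m ∈ poleInterval d m := by
  choose f hf using h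
  have hf_mono : StrictMono f := fun a b hab => by
    by_contra! hba
    exact (((hf b).2 a hab).trans (hf a).1).not_ge (hμ hba)
  simpa [hf_mono.apply_eq] using hf m

section Secular

variable {ι : Type*} [Fintype ι] {d z μ : ι → ℝ} {ρ : ℝ}

theorem prod_pole_sub_of_secular [DecidableEq ι]
    (hμ : ∀ x, ∏ j, (x - μ j) = ∏ j, (x - d j) - ρ * ∑ j, z j ^ 2 * ∏ k ∈ univ.erase j, (x - d k))
    (m : ι) : ∏ j, (d m - μ j) = -(ρ * z m ^ 2 * ∏ k ∈ univ.erase m, (d m - d k)) := by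
  rw [hμ, prod_eq_zero (mem_univ m) (sub_self _), sum_eq_single m, zero_sub, mul_assoc]
  · intro j _ hjm
    rw [prod_eq_zero (mem_erase.2 ⟨Ne.symm hjm, mem_univ m⟩) (sub_self _), mul_zero]
  · exact fun h => absurd (mem_univ m) h

theorem neg_one_pow_card_Iio_mul_prod_pole_sub_neg [LinearOrder ι] [LocallyFiniteOrderBot ι]
    [LocallyFiniteOrderTop ι]
    (hμ : ∀ x, ∏ j, (x - μ j) = ∏ j, (x - d j) - ρ * ∑ j, z j ^ 2 * ∏ k ∈ univ.erase j, (x - d k))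
    (hρ : 0 < ρ) (hz : ∀ j, z j ≠ 0) (hd : StrictAnti d) (m : ι) :
    (-1) ^ #(Iio m) * ∏ j, (d m - μ j) < 0 := by
  rw [prod_pole_sub_of_secular hμ, mul_neg, neg_lt_zero, mul_left_comm]
  exact mul_pos (mul_pos hρ (sq_pos_of_ne_zero (hz m)))
    (neg_one_pow_card_Iio_mul_prod_erase_sub_pos hd m)

end Secular

theorem exists_mem_poleInterval {n : ℕ} {d z μ : Fin n → ℝ} {ρ : ℝ}
    (hμ : ∀ x, ∏ j, (x - μ j) = ∏ j, (x - d j) - ρ * ∑ j, z j ^ 2 * ∏ k ∈ univ.erase j, (x - d k))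
    (hρ : 0 < ρ) (hz : ∀ j, z j ≠ 0) (hd : StrictAnti d) (m : Fin n) :
    ∃ j, μ j ∈ poleInterval d m := by
  have hsign := neg_one_pow_card_Iio_mul_prod_pole_sub_neg hμ hρ hz hd
  simp only [Fin.card_Iio] at hsign
  rcases m with ⟨_ | k, hm⟩
  · obtain ⟨B, hB⟩ := (Set.finite_range μ).bddAbove
    obtain ⟨T, hdT, hμT⟩ : ∃ T, d ⟨0, hm⟩ < T ∧ ∀ j, μ j < T :=
      ⟨max B (d ⟨0, hm⟩) + 1, by linarith [le_max_right B (d ⟨0, hm⟩)],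
        fun j => by linarith [hB ⟨j, rfl⟩, le_max_left B (d ⟨0, hm⟩)]⟩
    have hneg : ∏ j, (d ⟨0, hm⟩ - μ j) < 0 := by simpa using hsign ⟨0, hm⟩
    have hpos : 0 < ∏ j, (T - μ j) := prod_pos fun j _ => sub_pos.2 (hμT j)
    obtain ⟨j, -, hj⟩ := exists_mem_Ioo_of_prod_sub_mul_prod_sub_neg univ μ hdT.le
      (mul_neg_of_neg_of_pos hneg hpos)
    exact ⟨j, hj.1, fun l hl => (Nat.not_lt_zero _ hl).elim⟩
  · set p : Fin n := ⟨k, by omega⟩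
    have hpm : p < ⟨k + 1, hm⟩ := Nat.lt_succ_self k
    have hs : ((-1 : ℝ) ^ k) * (-1) ^ k = 1 := by rw [← mul_pow]; norm_num
    have hsign_m := hsign ⟨k + 1, hm⟩
    have hsign_p := hsign p
    rw [pow_succ] at hsign_m
    obtain ⟨j, -, hj⟩ := exists_mem_Ioo_of_prod_sub_mul_prod_sub_neg univ μ (hd hpm).le
      (by nlinarith)
    exact ⟨j, hj.1, fun l hl => hj.2.trans_le (hd.antitone (Nat.le_of_lt_succ hl))⟩

/-- For an irreducible DPR1 matrix `A = D + ρ z zᵀ` with `d₁ > ⋯ > dₙ`,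
`ρ > 0` and all `ζⱼ ≠ 0`, the decreasingly ordered eigenvalues `λ₁ ≥ ⋯ ≥ λₙ` of `A`
strictly interlace the poles: `λ₁ > d₁ > λ₂ > d₂ > ⋯ > λₙ > dₙ`. -/
theorem dpr1_interlacing {n : ℕ} (d z : Fin n → ℝ) (ρ : ℝ) (hρ : 0 < ρ)
    (hz : ∀ j, z j ≠ 0) (hd : StrictAnti d)
    (A : Matrix (Fin n) (Fin n) ℝ)
    (hA : A = Matrix.diagonal d + ρ • Matrix.vecMulVec z z)
    (hHerm : A.IsHermitian)
    (lam : Fin n → ℝ) (hord : Antitone lam)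
    (hperm : ∃ σ : Equiv.Perm (Fin n), lam = hHerm.eigenvalues ∘ σ) :
    ∀ i : Fin n, d i < lam i ∧ ∀ hi : (i : ℕ) + 1 < n, lam ⟨(i : ℕ) + 1, hi⟩ < d i := by
  subst hA
  obtain ⟨σ, rfl⟩ := hperm
  have hsecular : ∀ x, ∏ j, (x - (hHerm.eigenvalues ∘ σ) j)
      = ∏ j, (x - d j) - ρ * ∑ j, z j ^ 2 * ∏ k ∈ univ.erase j, (x - d k) := fun x =>
    (Equiv.prod_comp σ fun j => x - hHerm.eigenvalues j).trans
      (prod_sub_eigenvalues_diagonal_add_smul_vecMulVec hHerm x)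
  have hmem := hord.apply_mem_poleInterval (exists_mem_poleInterval hsecular hρ hz hd)
  exact fun i => ⟨(hmem i).1, fun hi => (hmem ⟨i + 1, hi⟩).2 i (Nat.lt_succ_self i)⟩
end

section
/- Let A = D + ρ z zᵀ be an n×n real symmetric matrix, where D = diag(d₁,…,dₙ) with d₁ > d₂ > ⋯ > dₙ, ρ > 0, and ζⱼ ≠ 0 for all j. Then A has exactly one eigenvalue in each open interval (d_{i+1}, d_i) for i = 1,…,n−1, exactly one eigenvalue in the interval (d₁, ∞), and no eigenvalue in (−∞, dₙ]. -/
/-!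
Away from the poles, the eigen-equation `(D - μ) x = -ρ (zᵀx) z` forces `x ∝ (D - μ)⁻¹ z`, so
`μ ∉ {d_j}` is an eigenvalue iff the secular function `f μ = 1 + ρ ∑ ζ_j² / (d_j - μ)` vanishes.
For `ρ > 0` and all `ζ_j ≠ 0`, `f` is strictly increasing between consecutive poles, tends to
`-∞` just right of each `d_j`, to `+∞` just left of it and to `1` at `+∞`; hence it has exactly one
zero in each `(d_{i+1}, d_i)` and in `(d_1, ∞)`. Below `d_n` every term of `f` is positive, and
`d_n` itself is no eigenvalue: the `n`-th row of the eigen-equation forces `zᵀx = 0`, hence `x = 0`.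
-/

open Matrix Filter Topology

theorem IsPreconnected.existsUnique_eq_of_injOn {α β : Type*} [TopologicalSpace α]
    [TopologicalSpace β] [LinearOrder β] [OrderClosedTopology β] {S : Set α} {f : α → β}
    (hS : IsPreconnected S) (hf : ContinuousOn f S) (hinj : S.InjOn f) {a b : α} {c : β}
    (ha : a ∈ S) (hb : b ∈ S) (hc : c ∈ Set.Icc (f a) (f b)) :
    ∃! x, x ∈ S ∧ f x = c := by
  obtain ⟨x, hxS, hx⟩ := hS.intermediate_value ha hb hf hc
  exact ⟨x, ⟨hxS, hx⟩, fun y ⟨hyS, hy⟩ => hinj hyS hxS (hy.trans hx.symm)⟩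

lemma div_sub_lt_div_sub {c e a b : ℝ} (hc : 0 < c) (hab : a < b) (he : e ∉ Set.Icc a b) :
    c / (e - a) < c / (e - b) := by
  have hprod : 0 < (e - a) * (e - b) := by
    rcases not_and_or.1 he with h | h
    · exact mul_pos_of_neg_of_neg (by linarith [not_le.1 h]) (by linarith [not_le.1 h])
    · exact mul_pos (by linarith [not_le.1 h]) (by linarith [not_le.1 h])
  have hea : e - a ≠ 0 := left_ne_zero_of_mul hprod.ne'
  have heb : e - b ≠ 0 := right_ne_zero_of_mul hprod.ne'
  rw [← sub_pos, div_sub_div _ _ heb hea]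
  exact div_pos (by nlinarith) (by nlinarith)

lemma tendsto_sub_left_self_nhds {a : ℝ} : Tendsto (fun μ => a - μ) (𝓝 a) (𝓝 0) := by
  simpa using (continuous_sub_left a).tendsto a

lemma tendsto_div_sub_nhdsGT_atBot {c a : ℝ} (hc : 0 < c) :
    Tendsto (fun μ => c / (a - μ)) (𝓝[>] a) atBot := by
  have h : Tendsto (fun μ => a - μ) (𝓝[>] a) (𝓝[<] 0) :=
    tendsto_nhdsWithin_iff.2 ⟨tendsto_sub_left_self_nhds.mono_left nhdsWithin_le_nhds,
      eventually_nhdsWithin_of_forall fun μ hμ => sub_neg.2 (Set.mem_Ioi.1 hμ)⟩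
  simpa only [div_eq_mul_inv, Function.comp_def] using
    (tendsto_inv_nhdsLT_zero.comp h).const_mul_atBot hc

lemma tendsto_div_sub_nhdsLT_atTop {c a : ℝ} (hc : 0 < c) :
    Tendsto (fun μ => c / (a - μ)) (𝓝[<] a) atTop := by
  have h : Tendsto (fun μ => a - μ) (𝓝[<] a) (𝓝[>] 0) :=
    tendsto_nhdsWithin_iff.2 ⟨tendsto_sub_left_self_nhds.mono_left nhdsWithin_le_nhds,
      eventually_nhdsWithin_of_forall fun μ hμ => sub_pos.2 (Set.mem_Iio.1 hμ)⟩
  simpa only [div_eq_mul_inv, Function.comp_def] using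
    (tendsto_inv_nhdsGT_zero.comp h).const_mul_atTop hc

section

variable {ι : Type*} [Fintype ι]

noncomputable def secularFunction (ρ : ℝ) (d z : ι → ℝ) (μ : ℝ) : ℝ :=
  1 + ρ * ∑ j, z j ^ 2 / (d j - μ)

variable {ρ μ : ℝ} {d z : ι → ℝ}

lemma dpr1_mulVec_eq_smul_iff [DecidableEq ι] {x : ι → ℝ} :
    (diagonal d + ρ • vecMulVec z z) *ᵥ x = μ • x ↔
      ∀ i, (d i - μ) * x i + ρ * (z ⬝ᵥ x) * z i = 0 := by
  rw [funext_iff]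
  refine forall_congr' fun i => ?_
  simp only [add_mulVec, smul_mulVec, vecMulVec_mulVec, mulVec_diagonal, Pi.add_apply,
    Pi.smul_apply, smul_eq_mul, MulOpposite.smul_eq_mul_unop, MulOpposite.unop_op]
  constructor <;> intro h <;> linarith

theorem dpr1_hasEigenvector_iff_secularFunction_eq_zero [DecidableEq ι] (hμ : ∀ j, d j ≠ μ) :
    (∃ x, x ≠ 0 ∧ (diagonal d + ρ • vecMulVec z z) *ᵥ x = μ • x) ↔
      secularFunction ρ d z μ = 0 := by
  have hsub : ∀ j, d j - μ ≠ 0 := fun j => sub_ne_zero.2 (hμ j)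
  simp_rw [dpr1_mulVec_eq_smul_iff]
  constructor
  · rintro ⟨x, hx0, hx⟩
    set s := z ⬝ᵥ x
    have hxi : ∀ i, x i = -(ρ * s) * z i / (d i - μ) := fun i => by
      rw [eq_div_iff (hsub i)]; linarith [hx i]
    have hs0 : s ≠ 0 := fun hs => hx0 <| funext fun i => by
      simpa [hs, hsub i] using hxi i
    have hs : s = -(ρ * s) * ∑ j, z j ^ 2 / (d j - μ) := by
      rw [Finset.mul_sum]
      exact Finset.sum_congr rfl fun j _ => by rw [hxi j]; ring
    refine (mul_eq_zero.1 ?_).resolve_left hs0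
    rw [secularFunction]; linear_combination hs
  · intro hf
    refine ⟨fun j => z j / (d j - μ), fun h0 => ?_, fun i => ?_⟩
    · have hz : ∀ j, z j = 0 := fun j => by
        simpa [hsub j] using congrFun h0 j
      simp [secularFunction, hz] at hf
    · have hs : z ⬝ᵥ (fun j => z j / (d j - μ)) = ∑ j, z j ^ 2 / (d j - μ) :=
        Finset.sum_congr rfl fun j _ => by ring
      rw [secularFunction] at hf
      rw [hs, mul_div_cancel₀ _ (hsub i)]
      linear_combination z i * hf

theorem dpr1_not_hasEigenvector_diag [DecidableEq ι] (hd : Function.Injective d) (hρ : ρ ≠ 0)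
    {k : ι} (hz : z k ≠ 0) :
    ¬ ∃ x, x ≠ 0 ∧ (diagonal d + ρ • vecMulVec z z) *ᵥ x = d k • x := by
  rintro ⟨x, hx0, hx⟩
  rw [dpr1_mulVec_eq_smul_iff] at hx
  have hs : z ⬝ᵥ x = 0 := by simpa [hρ, hz] using hx k
  have hoff : ∀ j, j ≠ k → x j = 0 := fun j hj => by
    simpa [hs, sub_eq_zero, hd.ne hj] using hx j
  have hxk : z k * x k = 0 := by
    rw [← hs, dotProduct, Finset.sum_eq_single k (fun j _ hj => by simp [hoff j hj]) (by simp)]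
  refine hx0 (funext fun j => ?_)
  by_cases hj : j = k
  · subst hj; simpa [hz] using hxk
  · exact hoff j hj

lemma secularFunction_pos (hρ : 0 ≤ ρ) (hμ : ∀ j, μ < d j) : 0 < secularFunction ρ d z μ := by
  have : 0 ≤ ∑ j, z j ^ 2 / (d j - μ) :=
    Finset.sum_nonneg fun j _ => div_nonneg (sq_nonneg _) (sub_pos.2 (hμ j)).le
  unfold secularFunction
  positivity

lemma strictMonoOn_secularFunction [Nonempty ι] (hρ : 0 < ρ) (hz : ∀ j, z j ≠ 0)
    {S : Set ℝ} (hS : S.OrdConnected) (hdS : ∀ j, d j ∉ S) :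
    StrictMonoOn (secularFunction ρ d z) S := by
  intro a ha b hb hab
  have hterm : ∀ j, z j ^ 2 / (d j - a) < z j ^ 2 / (d j - b) := fun j =>
    div_sub_lt_div_sub (sq_pos_of_ne_zero (hz j)) hab fun h => hdS j (hS.out ha hb h)
  unfold secularFunction
  gcongr 1 + ρ * ?_
  exact Finset.sum_lt_sum_of_nonempty Finset.univ_nonempty fun j _ => hterm j

lemma continuousAt_secularFunction (hμ : ∀ j, d j ≠ μ) :
    ContinuousAt (secularFunction ρ d z) μ := by
  unfold secularFunction
  have := fun j => sub_ne_zero.2 (hμ j)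
  fun_prop (disch := exact this _)

section Pole

variable [DecidableEq ι] (ρ d z) (k : ι)

noncomputable def secularFunctionRegular (μ : ℝ) : ℝ :=
  1 + ρ * ∑ j ∈ Finset.univ.erase k, z j ^ 2 / (d j - μ)

lemma secularFunction_eq_pole_add :
    secularFunction ρ d z =
      fun μ => ρ * z k ^ 2 / (d k - μ) + secularFunctionRegular ρ d z k μ := by
  ext μ
  rw [secularFunction, secularFunctionRegular, ← Finset.add_sum_erase _ _ (Finset.mem_univ k)]
  ring

variable {ρ d z k}

lemma continuousAt_secularFunctionRegular (hd : Function.Injective d) :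
    ContinuousAt (secularFunctionRegular ρ d z k) (d k) := by
  refine continuousAt_const.add (continuousAt_const.mul ?_)
  refine tendsto_finsetSum _ fun j hj => continuousAt_const.div (by fun_prop) ?_
  exact sub_ne_zero.2 (hd.ne (Finset.ne_of_mem_erase hj))

lemma tendsto_secularFunction_nhdsGT (hd : Function.Injective d) (hρ : 0 < ρ) (hz : z k ≠ 0) :
    Tendsto (secularFunction ρ d z) (𝓝[>] d k) atBot := by
  rw [secularFunction_eq_pole_add ρ d z k]
  exact (tendsto_div_sub_nhdsGT_atBot (mul_pos hρ (sq_pos_of_ne_zero hz))).atBot_add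
    ((continuousAt_secularFunctionRegular hd).tendsto.mono_left nhdsWithin_le_nhds)

lemma tendsto_secularFunction_nhdsLT (hd : Function.Injective d) (hρ : 0 < ρ) (hz : z k ≠ 0) :
    Tendsto (secularFunction ρ d z) (𝓝[<] d k) atTop := by
  rw [secularFunction_eq_pole_add ρ d z k]
  exact (tendsto_div_sub_nhdsLT_atTop (mul_pos hρ (sq_pos_of_ne_zero hz))).atTop_add
    ((continuousAt_secularFunctionRegular hd).tendsto.mono_left nhdsWithin_le_nhds)

end Pole

lemma tendsto_secularFunction_atTop : Tendsto (secularFunction ρ d z) atTop (𝓝 1) := by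
  have h : ∀ j, Tendsto (fun μ => z j ^ 2 / (d j - μ)) atTop (𝓝 0) := fun j =>
    (tendsto_atBot_add_const_left _ (d j) tendsto_neg_atTop_atBot).const_div_atBot _
  rw [show (1 : ℝ) = 1 + ρ * ∑ j : ι, 0 by simp]
  exact tendsto_const_nhds.add (tendsto_const_nhds.mul (tendsto_finsetSum _ fun j _ => h j))

theorem dpr1_existsUnique_eigenvalue_mem [DecidableEq ι] [Nonempty ι] (hρ : 0 < ρ)
    (hz : ∀ j, z j ≠ 0) {S : Set ℝ} (hS : S.OrdConnected) (hdS : ∀ j, d j ∉ S) {a b : ℝ}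
    (ha : a ∈ S) (hfa : secularFunction ρ d z a < 0)
    (hb : b ∈ S) (hfb : 0 < secularFunction ρ d z b) :
    ∃! μ, (∃ x, x ≠ 0 ∧ (diagonal d + ρ • vecMulVec z z) *ᵥ x = μ • x) ∧ μ ∈ S := by
  have hne : ∀ μ ∈ S, ∀ j, d j ≠ μ := fun μ hμ j h => hdS j (h ▸ hμ)
  obtain ⟨μ, ⟨hμS, hfμ⟩, huniq⟩ := hS.isPreconnected.existsUnique_eq_of_injOn
    (fun μ hμ => (continuousAt_secularFunction (hne μ hμ)).continuousWithinAt)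
    (strictMonoOn_secularFunction hρ hz hS hdS).injOn ha hb ⟨hfa.le, hfb.le⟩
  refine ⟨μ, ⟨(dpr1_hasEigenvector_iff_secularFunction_eq_zero (hne μ hμS)).2 hfμ, hμS⟩, ?_⟩
  rintro ν ⟨hν, hνS⟩
  exact huniq ν ⟨hνS, (dpr1_hasEigenvector_iff_secularFunction_eq_zero (hne ν hνS)).1 hν⟩

end

/-- For an irreducible DPR1 matrix `A = D + ρ z zᵀ` with `d₁ > ⋯ > dₙ`,
`ρ > 0` and all `ζⱼ ≠ 0`, there is exactly one eigenvalue of `A` in each open interval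
`(d_{i+1}, d_i)`, exactly one eigenvalue in `(d₁, ∞)`, and no eigenvalue in `(−∞, dₙ]`. -/
theorem dpr1_eigenvalue_location {n : ℕ} (hn : 0 < n) (d z : Fin n → ℝ) (ρ : ℝ)
    (hρ : 0 < ρ) (hz : ∀ j, z j ≠ 0) (hd : StrictAnti d)
    (A : Matrix (Fin n) (Fin n) ℝ)
    (hA : A = Matrix.diagonal d + ρ • Matrix.vecMulVec z z) :
    (∀ i : Fin n, ∀ hi : (i : ℕ) + 1 < n,
      ∃! μ : ℝ, (∃ x : Fin n → ℝ, x ≠ 0 ∧ A.mulVec x = μ • x) ∧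
        d ⟨(i : ℕ) + 1, hi⟩ < μ ∧ μ < d i) ∧
    (∃! μ : ℝ, (∃ x : Fin n → ℝ, x ≠ 0 ∧ A.mulVec x = μ • x) ∧ d ⟨0, hn⟩ < μ) ∧
    (∀ μ : ℝ, μ ≤ d ⟨n - 1, Nat.sub_lt hn Nat.one_pos⟩ →
      ¬ ∃ x : Fin n → ℝ, x ≠ 0 ∧ A.mulVec x = μ • x) := by
  subst hA
  have hinj := hd.injective
  have : Nonempty (Fin n) := ⟨⟨0, hn⟩⟩
  refine ⟨fun i hi => ?_, ?_, fun μ hμ => ?_⟩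
  · have hlt : d ⟨i + 1, hi⟩ < d i := hd (Fin.lt_def.2 (Nat.lt_succ_self _))
    obtain ⟨a, hfa, ha⟩ := ((tendsto_secularFunction_nhdsGT hinj hρ (hz _)).eventually
      (eventually_lt_atBot 0)).and (Ioo_mem_nhdsGT hlt) |>.exists
    obtain ⟨b, hfb, hb⟩ := ((tendsto_secularFunction_nhdsLT hinj hρ (hz i)).eventually
      (eventually_gt_atTop 0)).and (Ioo_mem_nhdsLT hlt) |>.exists
    refine dpr1_existsUnique_eigenvalue_mem hρ hz Set.ordConnected_Ioo (fun j hj => ?_)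
      ha hfa hb hfb
    rcases le_or_gt j i with h | h
    · exact hj.2.not_ge (hd.antitone h)
    · exact hj.1.not_ge (hd.antitone (Fin.le_def.2 h))
  · obtain ⟨a, hfa, ha⟩ := ((tendsto_secularFunction_nhdsGT hinj hρ (hz _)).eventually
      (eventually_lt_atBot 0)).and self_mem_nhdsWithin |>.exists
    obtain ⟨b, hfb, hb⟩ := (((tendsto_secularFunction_atTop (ρ := ρ) (d := d) (z := z)).eventually
      (eventually_gt_nhds one_pos)).and (eventually_gt_atTop _)).exists
    exact dpr1_existsUnique_eigenvalue_mem hρ hz Set.ordConnected_Ioi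
      (fun j hj => (hd.antitone (Fin.le_def.2 j.val.zero_le)).not_gt hj) ha hfa hb hfb
  · rcases hμ.eq_or_lt with rfl | hlt
    · exact dpr1_not_hasEigenvector_diag hinj hρ.ne' (hz _)
    · have hμd : ∀ j, μ < d j := fun j =>
        hlt.trans_le (hd.antitone (Fin.le_def.2 (Nat.le_sub_one_of_lt j.isLt)))
      rw [dpr1_hasEigenvector_iff_secularFunction_eq_zero fun j => (hμd j).ne']
      exact (secularFunction_pos hρ.le hμd).ne'
end

section
/- Let A = D + ρ z zᵀ be an n×n real symmetric matrix, where D = diag(d₁,…,dₙ) has pairwise distinct diagonal entries, ρ ≠ 0, and ζⱼ ≠ 0 for all j. Then no diagonal entry dᵢ is an eigenvalue of A; in particular, for every i the shifted matrix A − dᵢ I is invertible. -/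
open Matrix

/-!
If `(D + ρ z zᵀ) x = dᵢ x`, then row `i` reads `ρ ζᵢ (z ⬝ x) = 0`, so `z ⬝ x = 0`. The
remaining rows then reduce to `(dⱼ - dᵢ) xⱼ = 0`, so `x` is supported at `i`, and
`0 = z ⬝ x = ζᵢ xᵢ` kills the last coordinate.
-/

namespace Matrix

variable {ι : Type*} [Fintype ι] [DecidableEq ι]

theorem diagonal_add_smul_vecMulVec_mulVec {R : Type*} [CommRing R] (d z x : ι → R) (ρ : R) :
    (diagonal d + ρ • vecMulVec z z) *ᵥ x = d * x + (ρ * (z ⬝ᵥ x)) • z := by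
  ext j
  simp only [add_mulVec, mulVec_diagonal, smul_mulVec, vecMulVec_mulVec, Pi.add_apply,
    Pi.mul_apply, Pi.smul_apply, MulOpposite.smul_eq_mul_unop, MulOpposite.unop_op, smul_eq_mul]
  ring

theorem eq_zero_of_diagonal_add_smul_vecMulVec_mulVec_eq_smul {R : Type*} [CommRing R]
    [NoZeroDivisors R] {d z : ι → R} {ρ : R} (hρ : ρ ≠ 0) (hz : ∀ j, z j ≠ 0)
    (hd : Function.Injective d) (i : ι) {x : ι → R}
    (hx : (diagonal d + ρ • vecMulVec z z) *ᵥ x = d i • x) : x = 0 := by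
  have hrow : ∀ j, (d j - d i) * x j + ρ * (z ⬝ᵥ x) * z j = 0 := fun j => by
    have := congrFun hx j
    rw [diagonal_add_smul_vecMulVec_mulVec] at this
    simp only [Pi.add_apply, Pi.mul_apply, Pi.smul_apply, smul_eq_mul] at this
    linear_combination this
  have hzx : z ⬝ᵥ x = 0 := by
    simpa [hρ, hz i] using hrow i
  have hsupp : x = Pi.single i (x i) := by
    ext j
    rcases eq_or_ne j i with rfl | hji
    · simp
    · have : (d j - d i) * x j = 0 := by simpa [hzx] using hrow j
      simpa [hji, sub_ne_zero.2 (hd.ne hji)] using this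
  have hxi : x i = 0 := by
    rw [hsupp, dotProduct_single] at hzx
    simpa [hz i] using hzx
  rw [hsupp, hxi, Pi.single_zero]

theorem isUnit_sub_smul_one_of_forall_mulVec_eq_smul {K : Type*} [Field K] {M : Matrix ι ι K}
    {μ : K} (h : ∀ x, M *ᵥ x = μ • x → x = 0) : IsUnit (M - μ • (1 : Matrix ι ι K)) := by
  rw [← mulVec_injective_iff_isUnit, ← coe_mulVecLin, injective_iff_map_eq_zero]
  intro x hx
  rw [mulVecLin_apply, sub_mulVec, smul_mulVec, one_mulVec, sub_eq_zero] at hx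
  exact h x hx

end Matrix

/-- For an irreducible DPR1 matrix `A = D + ρ z zᵀ` (pairwise distinct `dⱼ`,
`ρ ≠ 0`, all `ζⱼ ≠ 0`), no diagonal entry `dᵢ` is an eigenvalue of `A`; in particular
`A − dᵢ I` is invertible for every `i`. -/
theorem dpr1_pole_not_eigenvalue {n : ℕ} (d z : Fin n → ℝ) (ρ : ℝ) (hρ : ρ ≠ 0)
    (hz : ∀ j, z j ≠ 0) (hd : Function.Injective d)
    (A : Matrix (Fin n) (Fin n) ℝ)
    (hA : A = Matrix.diagonal d + ρ • Matrix.vecMulVec z z) :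
    ∀ i : Fin n,
      (¬ ∃ x : Fin n → ℝ, x ≠ 0 ∧ A.mulVec x = d i • x) ∧
      IsUnit (A - d i • (1 : Matrix (Fin n) (Fin n) ℝ)) := by
  intro i
  subst hA
  have hker : ∀ x, (diagonal d + ρ • vecMulVec z z) *ᵥ x = d i • x → x = 0 :=
    fun _ hx => eq_zero_of_diagonal_add_smul_vecMulVec_mulVec_eq_smul hρ hz hd i hx
  exact ⟨fun ⟨x, hx0, hx⟩ => hx0 (hker x hx), isUnit_sub_smul_one_of_forall_mulVec_eq_smul hker⟩
end

section
/- Let A = D + ρ z zᵀ be an n×n real symmetric matrix, where D = diag(d₁,…,dₙ) has pairwise distinct diagonal entries, ρ > 0, and ζⱼ ≠ 0 for all j. Then A has n pairwise distinct eigenvalues; equivalently, every eigenvalue of A is simple (its eigenspace is one-dimensional). -/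
/-!
Write `A = diagonal d + vecMulVec u w`. If `v` is a `μ`-eigenvector with `w ⬝ᵥ v = 0`, then
`d j * v j = μ * v j` for all `j`, so `v` is supported on the at most one index with `d j = μ`,
and `w ⬝ᵥ v = w j * v j` then forces `v = 0`. Hence `v ↦ w ⬝ᵥ v` is injective on every
eigenspace, which therefore has dimension at most one. For a Hermitian matrix, a repeated
eigenvalue would put two orthonormal eigenvectors into one eigenspace.
-/

open Matrix Module Module.End Function

namespace Matrix

variable {K n : Type*} [Field K] [Fintype n] [DecidableEq n]

lemma eq_zero_of_mem_eigenspace_diagonal_add_vecMulVec_of_dotProduct_eq_zero {d u w : n → K}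
    (hd : Injective d) (hw : ∀ j, w j ≠ 0) {μ : K} {v : n → K}
    (hv : v ∈ eigenspace (diagonal d + vecMulVec u w).mulVecLin μ) (hwv : w ⬝ᵥ v = 0) :
    v = 0 := by
  rw [mem_eigenspace_iff, mulVecLin_apply, add_mulVec, vecMulVec_mulVec, hwv,
    MulOpposite.op_zero, zero_smul, add_zero] at hv
  have hsupp : ∀ j, v j ≠ 0 → d j = μ := fun j hj =>
    mul_right_cancel₀ hj (by simpa [mulVec_diagonal] using congrFun hv j)
  by_contra hne
  obtain ⟨j, hj⟩ : ∃ j, v j ≠ 0 := by simpa [funext_iff] using hne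
  have hsingle : v = Pi.single j (v j) := by
    ext k
    by_cases hk : k = j
    · subst hk; simp
    · rw [Pi.single_eq_of_ne hk]
      by_contra hvk
      exact hk (hd ((hsupp k hvk).trans (hsupp j hj).symm))
  rw [hsingle, dotProduct_single] at hwv
  exact mul_ne_zero (hw j) hj hwv

lemma finrank_eigenspace_diagonal_add_vecMulVec_le_one {d u w : n → K} (hd : Injective d)
    (hw : ∀ j, w j ≠ 0) (μ : K) :
    finrank K (eigenspace (diagonal d + vecMulVec u w).mulVecLin μ) ≤ 1 := by
  set p := eigenspace (diagonal d + vecMulVec u w).mulVecLin μ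
  have hinj : Injective ((dotProductBilin K K w).domRestrict p) := by
    rw [← LinearMap.ker_eq_bot, LinearMap.ker_eq_bot']
    rintro ⟨v, hv⟩ hwv
    exact Subtype.ext
      (eq_zero_of_mem_eigenspace_diagonal_add_vecMulVec_of_dotProduct_eq_zero hd hw hv hwv)
  simpa using LinearMap.finrank_le_finrank_of_injective hinj

lemma IsHermitian.eigenvalues_injective_of_finrank_eigenspace_le_one {𝕜 : Type*} [RCLike 𝕜]
    {A : Matrix n n 𝕜} (hA : A.IsHermitian)
    (h : ∀ μ : 𝕜, finrank 𝕜 (eigenspace A.mulVecLin μ) ≤ 1) : Injective hA.eigenvalues := by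
  intro i j hij
  let p := eigenspace A.mulVecLin (hA.eigenvalues i : 𝕜)
  have hmem : ∀ k : {k // hA.eigenvalues k = hA.eigenvalues i}, ⇑(hA.eigenvectorBasis k) ∈ p :=
    fun k => by
      rw [mem_eigenspace_iff, mulVecLin_apply, hA.mulVec_eigenvectorBasis, k.2,
        RCLike.real_smul_eq_coe_smul (K := 𝕜)]
  have hli : LinearIndependent 𝕜 fun k => (⟨_, hmem k⟩ : p) := by
    refine LinearIndependent.of_comp p.subtype ?_
    exact (hA.eigenvectorBasis.orthonormal.linearIndependent.map' _
      (WithLp.linearEquiv 2 𝕜 (n → 𝕜)).ker).comp _ Subtype.val_injective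
  have hcard := hli.fintype_card_le_finrank.trans (h _)
  exact congrArg Subtype.val (Fintype.card_le_one_iff.mp hcard ⟨i, rfl⟩ ⟨j, hij.symm⟩)

end Matrix

theorem dpr1_simple_eigenvalues_general {n : ℕ} (d z : Fin n → ℝ) (ρ : ℝ)
    (hz : ∀ j, z j ≠ 0) (hd : Function.Injective d)
    (A : Matrix (Fin n) (Fin n) ℝ)
    (hA : A = Matrix.diagonal d + ρ • Matrix.vecMulVec z z)
    (hHerm : A.IsHermitian) :
    Function.Injective hHerm.eigenvalues ∧
    ∀ μ : ℝ, Module.End.HasEigenvalue A.mulVecLin μ →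
      Module.finrank ℝ (Module.End.eigenspace A.mulVecLin μ) = 1 := by
  have hle : ∀ μ : ℝ, finrank ℝ (eigenspace A.mulVecLin μ) ≤ 1 := by
    rw [hA, ← smul_vecMulVec]
    exact finrank_eigenspace_diagonal_add_vecMulVec_le_one hd hz
  refine ⟨hHerm.eigenvalues_injective_of_finrank_eigenspace_le_one hle, fun μ hμ => ?_⟩
  have : Nontrivial (eigenspace A.mulVecLin μ) := Submodule.nontrivial_iff_ne_bot.mpr hμ
  exact (hle μ).antisymm finrank_pos

/-- An irreducible DPR1 matrix `A = D + ρ z zᵀ` (pairwise distinct `dⱼ`,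
`ρ > 0`, all `ζⱼ ≠ 0`) has `n` pairwise distinct eigenvalues; equivalently every
eigenvalue of `A` is simple, i.e. its eigenspace is one-dimensional. -/
theorem dpr1_simple_eigenvalues {n : ℕ} (d z : Fin n → ℝ) (ρ : ℝ) (hρ : 0 < ρ)
    (hz : ∀ j, z j ≠ 0) (hd : Function.Injective d)
    (A : Matrix (Fin n) (Fin n) ℝ)
    (hA : A = Matrix.diagonal d + ρ • Matrix.vecMulVec z z)
    (hHerm : A.IsHermitian) :
    Function.Injective hHerm.eigenvalues ∧
    ∀ μ : ℝ, Module.End.HasEigenvalue A.mulVecLin μ →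
      Module.finrank ℝ (Module.End.eigenspace A.mulVecLin μ) = 1 :=
  dpr1_simple_eigenvalues_general d z ρ hz hd A hA hHerm
end

section
/- Let A = D + ρ z zᵀ with D = diag(d₁,…,dₙ), z ∈ ℝⁿ, ρ ≠ 0, and fix an index i with ζᵢ ≠ 0 and dⱼ ≠ dᵢ for all j ≠ i. Define the n×n symmetric arrowhead matrix M by: M_{jj} = 1/(dⱼ − dᵢ) for j ≠ i; M_{ji} = M_{ij} = −ζⱼ/(ζᵢ (dⱼ − dᵢ)) for j ≠ i; M_{ii} = (1/ζᵢ²)(1/ρ + ∑_{j≠i} ζⱼ²/(dⱼ − dᵢ)); and M_{jk} = 0 for j ≠ k with j ≠ i and k ≠ i. Then M · (A − dᵢ I) = I; in particular A − dᵢ I is invertible and (A − dᵢ I)⁻¹ = M. -/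
/-!
Write `A - dᵢ I = Δ + ρ z zᵀ` with `Δ = diag(dⱼ - dᵢ)`, which is singular exactly at `i`.
Entrywise one checks `M Δ = I - eᵢ zᵀ / ζᵢ` and `M z = eᵢ / (ρ ζᵢ)`, so
`M (ρ z zᵀ) = eᵢ zᵀ / ζᵢ` cancels the defect of `M Δ`.
-/

open Matrix

variable {ι K : Type*} [DecidableEq ι]

theorem diagonal_add_smul_vecMulVec_sub_smul_one [Ring K] (d z : ι → K) (ρ : K) (i : ι) :
    diagonal d + ρ • vecMulVec z z - d i • (1 : Matrix ι ι K)
      = diagonal (fun j => d j - d i) + ρ • vecMulVec z z := by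
  rw [smul_one_eq_diagonal, add_sub_right_comm, diagonal_sub]

variable [Fintype ι] [Field K]

def dpr1ShiftedInverse (d z : ι → K) (ρ : K) (i : ι) : Matrix ι ι K :=
  Matrix.of fun j k =>
    if j = i then
      (if k = i then
        1 / z i ^ 2 * (1 / ρ + ∑ l ∈ Finset.univ.erase i, z l ^ 2 / (d l - d i))
      else -z k / (z i * (d k - d i)))
    else if k = i then -z j / (z i * (d j - d i))
    else if j = k then 1 / (d j - d i)
    else 0

section
variable {d z : ι → K} {i : ι}

theorem dpr1ShiftedInverse_mulVec (ρ : K) (hzi : z i ≠ 0) (hd : ∀ j, j ≠ i → d j ≠ d i) :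
    dpr1ShiftedInverse d z ρ i *ᵥ z = Pi.single i (ρ * z i)⁻¹ := by
  ext j
  rw [mulVec, dotProduct, ← Finset.add_sum_erase _ _ (Finset.mem_univ i)]
  by_cases hj : j = i
  · subst hj
    have hsummand : ∀ l ∈ Finset.univ.erase j, dpr1ShiftedInverse d z ρ j j l * z l
        = -(z j)⁻¹ * (z l ^ 2 / (d l - d j)) := by
      intro l hl
      have hl : l ≠ j := Finset.ne_of_mem_erase hl
      simp only [dpr1ShiftedInverse, of_apply, ↓reduceIte, if_neg hl]
      field_simp [sub_ne_zero.2 (hd l hl)]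
    rw [Finset.sum_congr rfl hsummand, ← Finset.mul_sum]
    simp only [dpr1ShiftedInverse, of_apply, ↓reduceIte, Pi.single_eq_same]
    field_simp
    ring
  · have hsummand : ∀ l ∈ Finset.univ.erase i, dpr1ShiftedInverse d z ρ i j l * z l
        = if l = j then z j / (d j - d i) else 0 := by
      intro l hl
      have hl : l ≠ i := Finset.ne_of_mem_erase hl
      simp only [dpr1ShiftedInverse, of_apply, if_neg hj, if_neg hl]
      by_cases hlj : l = j
      · subst hlj
        simp only [↓reduceIte]
        ring
      · simp only [hlj, Ne.symm hlj, ↓reduceIte, zero_mul]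
    rw [Finset.sum_congr rfl hsummand, Finset.sum_ite_eq' _ _ _]
    simp only [dpr1ShiftedInverse, of_apply, ↓reduceIte, Pi.single_eq_of_ne hj,
      Finset.mem_erase, ne_eq, hj, not_false_eq_true, Finset.mem_univ, and_self]
    field_simp [sub_ne_zero.2 (hd j hj)]
    ring

theorem dpr1ShiftedInverse_mul_diagonal (ρ : K) (hzi : z i ≠ 0)
    (hd : ∀ j, j ≠ i → d j ≠ d i) :
    dpr1ShiftedInverse d z ρ i * diagonal (fun j => d j - d i)
      = 1 - vecMulVec (Pi.single i (z i)⁻¹) z := by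
  ext j k
  rw [mul_diagonal, Matrix.sub_apply, one_apply, vecMulVec_apply]
  by_cases hk : k = i
  · subst hk
    by_cases hj : j = k <;> simp [hj, hzi]
  by_cases hj : j = i
  · subst hj
    simp only [dpr1ShiftedInverse, of_apply, ↓reduceIte, if_neg hk, Pi.single_eq_same, Ne.symm hk]
    field_simp [sub_ne_zero.2 (hd k hk)]
    ring
  · simp only [dpr1ShiftedInverse, of_apply, if_neg hj, if_neg hk, Pi.single_eq_of_ne hj]
    split_ifs with h
    · subst h
      field_simp [sub_ne_zero.2 (hd j hj)]
      ring
    · simp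

theorem dpr1ShiftedInverse_mul {ρ : K} (hρ : ρ ≠ 0) (hzi : z i ≠ 0)
    (hd : ∀ j, j ≠ i → d j ≠ d i) :
    dpr1ShiftedInverse d z ρ i * (diagonal (fun j => d j - d i) + ρ • vecMulVec z z) = 1 := by
  rw [Matrix.mul_add, Matrix.mul_smul, mul_vecMulVec, dpr1ShiftedInverse_mul_diagonal ρ hzi hd,
    dpr1ShiftedInverse_mulVec ρ hzi hd, ← smul_vecMulVec, ← Pi.single_smul, smul_eq_mul,
    mul_inv, mul_inv_cancel_left₀ hρ, sub_add_cancel]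

end

/-- For a DPR1 matrix `A = D + ρ z zᵀ` with `ρ ≠ 0`, `ζᵢ ≠ 0` and
`dⱼ ≠ dᵢ` for `j ≠ i`, the explicitly given symmetric arrowhead matrix `M` satisfies
`M (A − dᵢ I) = I`; in particular `A − dᵢ I` is invertible with inverse `M`. -/
theorem dpr1_shifted_inverse_arrowhead {n : ℕ} (d z : Fin n → ℝ) (ρ : ℝ) (hρ : ρ ≠ 0)
    (i : Fin n) (hzi : z i ≠ 0) (hd : ∀ j, j ≠ i → d j ≠ d i)
    (A : Matrix (Fin n) (Fin n) ℝ)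
    (hA : A = Matrix.diagonal d + ρ • Matrix.vecMulVec z z)
    (M : Matrix (Fin n) (Fin n) ℝ)
    (hM : M = Matrix.of fun j k =>
      if j = i then
        (if k = i then
          1 / z i ^ 2 * (1 / ρ + ∑ l ∈ Finset.univ.erase i, z l ^ 2 / (d l - d i))
        else -z k / (z i * (d k - d i)))
      else if k = i then -z j / (z i * (d j - d i))
      else if j = k then 1 / (d j - d i)
      else 0) :
    M * (A - d i • (1 : Matrix (Fin n) (Fin n) ℝ)) = 1 ∧
    IsUnit (A - d i • (1 : Matrix (Fin n) (Fin n) ℝ)) ∧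
    (A - d i • (1 : Matrix (Fin n) (Fin n) ℝ))⁻¹ = M := by
  have hM : M = dpr1ShiftedInverse d z ρ i := hM
  have hinv : M * (A - d i • (1 : Matrix (Fin n) (Fin n) ℝ)) = 1 := by
    rw [hA, hM, diagonal_add_smul_vecMulVec_sub_smul_one, dpr1ShiftedInverse_mul hρ hzi hd]
  exact ⟨hinv, (isUnit_iff_isUnit_det _).2 (isUnit_det_of_left_inverse hinv),
    inv_eq_left_inv hinv⟩
end

section
/- Let A = D + ρ z z* be an n×n complex Hermitian matrix, where D = diag(d₁,…,dₙ) is a real diagonal matrix, z = (ζ₁,…,ζₙ)ᵀ ∈ ℂⁿ, z* denotes the conjugate transpose, and ρ is a nonzero real scalar. Let λ ∈ ℝ satisfy λ ≠ dⱼ for all j. Then λ is an eigenvalue of A if and only if 1 + ρ ∑_{j=1}^{n} |ζⱼ|²/(dⱼ − λ) = 0. -/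
/-!
By the matrix determinant lemma, `det (D - λ + ρ z z*) = ∏ⱼ (dⱼ - λ) · (1 + ρ ∑ⱼ |ζⱼ|² / (dⱼ - λ))`,
and the product is nonzero because `λ` is not a pole.
-/

open Matrix

namespace Matrix

variable {ι K : Type*} [Fintype ι] [DecidableEq ι] [Field K]

theorem inv_diagonal_of_ne_zero {d : ι → K} (hd : ∀ i, d i ≠ 0) :
    (diagonal d)⁻¹ = diagonal fun i => (d i)⁻¹ :=
  inv_eq_left_inv <| by simp only [diagonal_mul_diagonal, inv_mul_cancel₀ (hd _), diagonal_one]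

theorem det_diagonal_add_vecMulVec {d : ι → K} (hd : ∀ i, d i ≠ 0) (u v : ι → K) :
    (diagonal d + vecMulVec u v).det = (∏ i, d i) * (1 + ∑ i, v i * u i / d i) := by
  have hdet : IsUnit (diagonal d).det := by
    simpa [det_diagonal, Finset.prod_ne_zero_iff] using hd
  rw [vecMulVec_eq Unit, det_add_replicateCol_mul_replicateRow hdet, det_diagonal,
    inv_diagonal_of_ne_zero hd, det_unique]
  congr 1
  simp [mul_apply, diagonal_apply, replicateRow, replicateCol, div_eq_mul_inv, mul_right_comm]

theorem exists_mulVec_eq_smul_iff_det_sub_eq_zero (A : Matrix ι ι K) (μ : K) :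
    (∃ x ≠ 0, A *ᵥ x = μ • x) ↔ (A - μ • 1).det = 0 := by
  simp only [← exists_mulVec_eq_zero_iff, sub_mulVec, smul_mulVec, one_mulVec, sub_eq_zero]

theorem exists_mulVec_eq_smul_iff_secular {d : ι → K} {μ : K} (hμ : ∀ i, d i ≠ μ) (u v : ι → K) :
    (∃ x ≠ 0, (diagonal d + vecMulVec u v) *ᵥ x = μ • x) ↔
      1 + ∑ i, v i * u i / (d i - μ) = 0 := by
  have hshift : diagonal d + vecMulVec u v - μ • 1 =
      diagonal (fun i => d i - μ) + vecMulVec u v := by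
    rw [add_sub_right_comm, smul_one_eq_diagonal, diagonal_sub]
  have hpoles : ∀ i, d i - μ ≠ 0 := fun i => sub_ne_zero.mpr (hμ i)
  rw [exists_mulVec_eq_smul_iff_det_sub_eq_zero, hshift, det_diagonal_add_vecMulVec hpoles,
    mul_eq_zero, or_iff_right (Finset.prod_ne_zero_iff.mpr fun i _ => hpoles i)]

end Matrix

theorem dpr1_hermitian_eigenvalue_iff_secular_general {n : ℕ} (d : Fin n → ℝ) (z : Fin n → ℂ)
    (ρ : ℝ)
    (A : Matrix (Fin n) (Fin n) ℂ)
    (hA : A = Matrix.diagonal (fun j => (d j : ℂ)) +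
      (ρ : ℂ) • Matrix.vecMulVec z (fun j => star (z j)))
    (lam : ℝ) (hlam : ∀ j, lam ≠ d j) :
    (∃ x : Fin n → ℂ, x ≠ 0 ∧ A.mulVec x = (lam : ℂ) • x) ↔
      1 + ρ * ∑ j, ‖z j‖ ^ 2 / (d j - lam) = 0 := by
  have hpoles : ∀ j, (d j : ℂ) ≠ lam := fun j => by exact_mod_cast (hlam j).symm
  have hsecular : 1 + ∑ j, star (z j) * ((ρ : ℂ) • z) j / ((d j : ℂ) - lam) =
      ((1 + ρ * ∑ j, ‖z j‖ ^ 2 / (d j - lam) : ℝ) : ℂ) := by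
    push_cast
    simp only [Pi.smul_apply, smul_eq_mul, mul_left_comm _ (ρ : ℂ), Complex.star_def,
      Complex.conj_mul', Finset.mul_sum, mul_div_assoc]
  rw [hA, ← smul_vecMulVec, exists_mulVec_eq_smul_iff_secular hpoles, hsecular,
    Complex.ofReal_eq_zero]

/-- For the complex Hermitian DPR1 matrix `A = D + ρ z z*` with real
diagonal `D`, real `ρ ≠ 0`, and a real `λ` distinct from all poles `dⱼ`, `λ` is an
eigenvalue of `A` iff `1 + ρ ∑ⱼ |ζⱼ|²/(dⱼ − λ) = 0`. -/
theorem dpr1_hermitian_eigenvalue_iff_secular {n : ℕ} (d : Fin n → ℝ) (z : Fin n → ℂ)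
    (ρ : ℝ) (hρ : ρ ≠ 0)
    (A : Matrix (Fin n) (Fin n) ℂ)
    (hA : A = Matrix.diagonal (fun j => (d j : ℂ)) +
      (ρ : ℂ) • Matrix.vecMulVec z (fun j => star (z j)))
    (lam : ℝ) (hlam : ∀ j, lam ≠ d j) :
    (∃ x : Fin n → ℂ, x ≠ 0 ∧ A.mulVec x = (lam : ℂ) • x) ↔
      1 + ρ * ∑ j, ‖z j‖ ^ 2 / (d j - lam) = 0 :=
  dpr1_hermitian_eigenvalue_iff_secular_general d z ρ A hA lam hlam
end
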